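/- Let P be a lattice-face d-simplex with vertices v_1,…,v_{d+1}. Then for every permutation σ ∈ S_d and every 1 ≤ k ≤ d, the ratio z(σ,k)/z(σ,k−1) is an integer, where by convention z(σ,0) = 1. -/

import Mathlib

open MeasureTheory Polynomial

noncomputable section

/-- The lattice points of `ℝ^d`: points all of whose coordinates are integers. -/
def latticePts (d : ℕ) : Set (Fin d → ℝ) := {x | ∀ i, ∃ n : ℤ, x i = (n : ℝ)}

/-- The projection `π^{(d-k)} : ℝ^d → ℝ^k` forgetting the last `d - k` coordinates
(for `k ≤ d`; junk value `0` in out-of-range coordinates otherwise). -/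
def projTo (d k : ℕ) (x : Fin d → ℝ) : Fin k → ℝ :=
  fun i => if h : (i : ℕ) < d then x ⟨(i : ℕ), h⟩ else 0

/-- A polytope with vertex set `V ⊆ ℝ^d` is a lattice-face polytope if for every
`0 ≤ k ≤ d-1` and every `(k+1)`-subset `U ⊆ V`, `π^{(d-k)}(aff(U) ∩ ℤ^d) = ℤ^k`. -/
def IsLatticeFace (d : ℕ) (V : Finset (Fin d → ℝ)) : Prop :=
  ∀ k : ℕ, k < d → ∀ U : Finset (Fin d → ℝ), U ⊆ V → U.card = k + 1 →
    projTo d k '' ((affineSpan ℝ (U : Set (Fin d → ℝ)) : Set (Fin d → ℝ)) ∩ latticePts d)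
      = latticePts k

/-- The last coordinate of a point of `ℝ^d`. -/
def lastCoord (d : ℕ) (x : Fin d → ℝ) : ℝ :=
  if h : 0 < d then x ⟨d - 1, by omega⟩ else 0

/-- The negative boundary `NB(P)`: points of `P` minimizing the last coordinate in
their fiber over `π(P)`. -/
def NB (d : ℕ) (P : Set (Fin d → ℝ)) : Set (Fin d → ℝ) :=
  {x | x ∈ P ∧ ∀ y ∈ P, projTo d (d - 1) y = projTo d (d - 1) x → lastCoord d x ≤ lastCoord d y}

/-- The positive boundary `PB(P)`: points of `P` maximizing the last coordinate in
their fiber over `π(P)`. -/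
def PB (d : ℕ) (P : Set (Fin d → ℝ)) : Set (Fin d → ℝ) :=
  {x | x ∈ P ∧ ∀ y ∈ P, projTo d (d - 1) y = projTo d (d - 1) x → lastCoord d y ≤ lastCoord d x}

/-- `i(P,m)`: the number of lattice points in the dilate `mP`. -/
def ehr (d : ℕ) (P : Set (Fin d → ℝ)) (m : ℕ) : ℕ :=
  (latticePts d ∩ (fun x => (m : ℝ) • x) '' P).ncard

/-- `î(P,m)`: the number of lattice points in the interior of the dilate `mP`. -/
def intEhr (d : ℕ) (P : Set (Fin d → ℝ)) (m : ℕ) : ℕ :=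
  (latticePts d ∩ interior ((fun x => (m : ℝ) • x) '' P)).ncard

/-- The `j`-th coordinate (`0`-indexed) of a point of `ℝ^d`, junk value `0` if `j ≥ d`. -/
def coordN {d : ℕ} (w : Fin d → ℝ) (j : ℕ) : ℝ := if h : j < d then w ⟨j, h⟩ else 0

/-- The vertex occurring in row `p` (0-indexed) of the matrices `X(σ,k)`, `Y(σ,k)`:
vertex `v_{σ(p+1)}` for `p < k`, and `v_{d+1}` for the last row of `X(σ,k)`. -/
def rowVert (d : ℕ) (v : Fin (d + 1) → Fin d → ℝ) (σ : Equiv.Perm (Fin d)) (k p : ℕ) :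
    Fin d → ℝ :=
  if h : p < k ∧ p < d then v (Fin.castSucc (σ ⟨p, h.2⟩)) else v (Fin.last d)

/-- The matrix `X(σ,k)` with rows `(1, x_{σ(i),1},…,x_{σ(i),k})` for `1 ≤ i ≤ k`
followed by `(1, x_{d+1,1},…,x_{d+1,k})`. -/
def Xmat (d : ℕ) (v : Fin (d + 1) → Fin d → ℝ) (σ : Equiv.Perm (Fin d)) (k : ℕ) :
    Matrix (Fin (k + 1)) (Fin (k + 1)) ℝ :=
  Matrix.of fun p q =>
    if (q : ℕ) = 0 then 1 else coordN (rowVert d v σ k (p : ℕ)) ((q : ℕ) - 1)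

/-- The matrix `Y(σ,k)` with rows `(1, x_{σ(i),1},…,x_{σ(i),k-1})` for `1 ≤ i ≤ k`. -/
def Ymat (d : ℕ) (v : Fin (d + 1) → Fin d → ℝ) (σ : Equiv.Perm (Fin d)) (k : ℕ) :
    Matrix (Fin k) (Fin k) ℝ :=
  Matrix.of fun p q =>
    if (q : ℕ) = 0 then 1 else coordN (rowVert d v σ k (p : ℕ)) ((q : ℕ) - 1)

/-- The matrix `X̃(σ,k;x)`: `X(σ,k)` with its last row replaced by `(1, x_1,…,x_k)`. -/
def Xtil (d : ℕ) (v : Fin (d + 1) → Fin d → ℝ) (σ : Equiv.Perm (Fin d)) (k : ℕ)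
    (x : Fin d → ℝ) : Matrix (Fin (k + 1)) (Fin (k + 1)) ℝ :=
  Matrix.of fun p q =>
    if (q : ℕ) = 0 then 1
    else if (p : ℕ) < k then coordN (rowVert d v σ k (p : ℕ)) ((q : ℕ) - 1)
    else coordN x ((q : ℕ) - 1)

/-- `z(σ,k) = det X(σ,k) / det Y(σ,k)`; note `z(σ,0) = 1`. -/
def zc (d : ℕ) (v : Fin (d + 1) → Fin d → ℝ) (σ : Equiv.Perm (Fin d)) (k : ℕ) : ℝ :=
  (Xmat d v σ k).det / (Ymat d v σ k).det

/-- The minor `m(σ,k;j)` of `X̃(σ,k;x)` obtained by deleting the last row and the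
`(j+1)`-st column (it does not depend on `x`). -/
def minorM (d : ℕ) (v : Fin (d + 1) → Fin d → ℝ) (σ : Equiv.Perm (Fin d)) (k j : ℕ) : ℝ :=
  (Matrix.of fun p q : Fin k =>
    Xmat d v σ k (Fin.castSucc p) (if (q : ℕ) < j + 1 then Fin.castSucc q else q.succ)).det

/-- A `d`-simplex with vertices `v_1, …, v_{d+1}` is in general position if its vertices
are affinely independent and for every `0 ≤ k ≤ d-1` and every `(k+1)`-subset `U` of the
vertex set, `π^{(d-k)}(conv U)` is a `k`-simplex. -/
def SimplexGenPos (d : ℕ) (v : Fin (d + 1) → Fin d → ℝ) : Prop :=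
  AffineIndependent ℝ v ∧
    ∀ k : ℕ, k < d → ∀ U : Finset (Fin (d + 1)), U.card = k + 1 →
      affineSpan ℝ (projTo d k '' (v '' (U : Set (Fin (d + 1))))) = ⊤

/-- A lattice-face `d`-simplex, given by its `d+1` affinely independent vertices. -/
def SimplexLatticeFace (d : ℕ) (v : Fin (d + 1) → Fin d → ℝ) : Prop :=
  AffineIndependent ℝ v ∧
    ∀ k : ℕ, k < d → ∀ U : Finset (Fin (d + 1)), U.card = k + 1 →
      projTo d k ''
          ((affineSpan ℝ (v '' (U : Set (Fin (d + 1)))) : Set (Fin d → ℝ)) ∩ latticePts d)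
        = latticePts k

open scoped Classical in
/-- The sign of a facet `F` of `P`: `+1` if `F` has a relative-interior point on the
positive boundary, `-1` if on the negative boundary, `0` otherwise. -/
def facetSign (d : ℕ) (P F : Set (Fin d → ℝ)) : ℝ :=
  if ∃ x ∈ intrinsicInterior ℝ F, x ∈ PB d P then 1
  else if ∃ x ∈ intrinsicInterior ℝ F, x ∈ NB d P then -1
  else 0

/-- The Bernoulli polynomial `B_n(x)`, as a real polynomial. -/
def bernR (n : ℕ) : Polynomial ℝ := (Polynomial.bernoulli n).map (algebraMap ℚ ℝ)

/-- The `k`-th power sum polynomial `P_k(x) = (B_{k+1}(x+1) - B_{k+1}(0))/(k+1)`. -/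
def PkR (k : ℕ) : Polynomial ℝ :=
  Polynomial.C (((k : ℝ) + 1)⁻¹) *
    ((bernR (k + 1)).comp (Polynomial.X + 1) - Polynomial.C ((bernR (k + 1)).eval 0))

/-- The extension of the summation operation: for a polynomial `h(s) = Σ_k h_k s^k`,
`Σ_{s=1}^{u} h := h_0 u + Σ_{k ≥ 1} h_k P_k(u)`, as a polynomial in the upper bound `u`. -/
def extSumPoly (h : Polynomial ℝ) : Polynomial ℝ :=
  Polynomial.C (h.coeff 0) * Polynomial.X +
    ∑ k ∈ Finset.Icc 1 h.natDegree, Polynomial.C (h.coeff k) * PkR k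

/-- `fdPoly n a` is the polynomial (in the first variable `a_1`) expressing
`f_{n+1}(a_1, a 0, a 1, …)`, defined recursively by `f_1(a_1) = a_1` and
`f_d(a_1,…,a_d) = Σ_{s=1}^{a_1} f_{d-1}(a_2 s, a_3, …, a_d)` using the extended sum. -/
def fdPoly : ℕ → (ℕ → ℝ) → Polynomial ℝ
  | 0, _ => Polynomial.X
  | n + 1, a =>
      extSumPoly ((fdPoly n (fun i => a (i + 1))).comp (Polynomial.C (a 0) * Polynomial.X))

/-- `f_d(a_1, …, a_d)` where `a_k = a (k-1)` (0-indexed). -/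
def fd (d : ℕ) (a : ℕ → ℝ) : ℝ := (fdPoly (d - 1) (fun i => a (i + 1))).eval (a 0)

/-- `g_d(b_1, …, b_d) = f_d(b_1/b_0, b_2/b_1, …, b_d/b_{d-1})` where `b_k = b k` and
`b 0 = 1` by convention. -/
def gd (d : ℕ) (b : ℕ → ℝ) : ℝ := fd d (fun i => b (i + 1) / b i)

/-- `x̄` for an integer: `x̄ = x` if `x ≥ 0` and `x̄ = -x-1` if `x < 0`. -/
def barNat (n : ℤ) : ℕ := if 0 ≤ n then n.toNat else (-n - 1).toNat

/-- The half-open segment `Ω(conv(0,x))`: `(0,x]` if `x ≥ 0` and `(x,0]` if `x < 0`. -/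
def hoSeg (x : ℝ) : Set ℝ := if 0 ≤ x then Set.Ioc 0 x else Set.Ioc x 0

/-- The previous coordinate `s_{k-1}` of a point `s ∈ ℝ^d`, with `s_0 = 1`. -/
def sPrev (d : ℕ) (s : Fin d → ℝ) (k : Fin d) : ℝ :=
  if (k : ℕ) = 0 then 1 else s ⟨(k : ℕ) - 1, lt_of_le_of_lt (Nat.sub_le _ _) k.isLt⟩

/-- The nested sum `Σ_{s_1=1}^{⌊a_1 sp⌋¯} Σ_{s_2=1}^{⌊a_2 s_1⌋¯} ⋯ 1` over positive
integers. -/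
def nestedCount : ℕ → (ℕ → ℝ) → ℕ → ℕ
  | 0, _, _ => 1
  | n + 1, a, sp =>
      ∑ s ∈ Finset.Icc 1 (barNat ⌊a 0 * (sp : ℝ)⌋), nestedCount n (fun i => a (i + 1)) s

/-- The nested extended sum `Σ_{s_1=1}^{\bar{a_1 s_0}} ⋯ Σ_{s_d=1}^{\bar{a_d s_{d-1}}} 1`,
as a polynomial in `s_0`, where for positive `s` the bar is `a s` if `a > 0` and
`-a s - 1` if `a < 0`. -/
def barNested : ℕ → (ℕ → ℝ) → Polynomial ℝ
  | 0, _ => 1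
  | n + 1, a =>
      (extSumPoly (barNested n (fun i => a (i + 1)))).comp
        (if 0 < a 0 then Polynomial.C (a 0) * Polynomial.X
         else -(Polynomial.C (a 0) * Polynomial.X) - 1)

/-- Row vertex for the hat matrices: `v_{σ(p+1)}` for `p < d`. -/
def rowVert' (d : ℕ) (v : Fin (d + 1) → Fin d → ℝ) (σ : Equiv.Perm (Fin d)) (p : ℕ) :
    Fin d → ℝ :=
  if h : p < d then v (Fin.castSucc (σ ⟨p, h⟩)) else v (Fin.last d)

/-- The matrix `X̂(σ,k)` with entries `x̂_{σ(p),q} = x_{σ(p),q} - x_{d+1,q}`. -/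
def XhatM (d : ℕ) (v : Fin (d + 1) → Fin d → ℝ) (σ : Equiv.Perm (Fin d)) (k : ℕ) :
    Matrix (Fin k) (Fin k) ℝ :=
  Matrix.of fun p q =>
    coordN (rowVert' d v σ (p : ℕ)) (q : ℕ) - coordN (v (Fin.last d)) (q : ℕ)

/-- The matrix `Ŷ(σ,k)` with rows `(1, x̂_{σ(p),1},…,x̂_{σ(p),k-1})`. -/
def YhatM (d : ℕ) (v : Fin (d + 1) → Fin d → ℝ) (σ : Equiv.Perm (Fin d)) (k : ℕ) :
    Matrix (Fin k) (Fin k) ℝ :=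
  Matrix.of fun p q =>
    if (q : ℕ) = 0 then 1
    else coordN (rowVert' d v σ (p : ℕ)) ((q : ℕ) - 1) - coordN (v (Fin.last d)) ((q : ℕ) - 1)

/-- `ẑ(σ,k) = det X̂(σ,k) / det Ŷ(σ,k)`. -/
def zhat (d : ℕ) (v : Fin (d + 1) → Fin d → ℝ) (σ : Equiv.Perm (Fin d)) (k : ℕ) : ℝ :=
  (XhatM d v σ k).det / (YhatM d v σ k).det

end

/-!
Write `b = v_{d+1}` and `A_j = aff(v_{σ(1)}, …, v_{σ(j)})`. For `|U| = j + 1` the lattice-face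
property says that `π^{(d-j)}` maps `aff U ∩ ℤ^d` onto `ℤ^j`; since `dim aff U ≤ j`, this makes
`π^{(d-j)}` injective on `aff U`, and every unit vector `e_i ∈ ℝ^j` lifts to an integral vector
in the direction of `aff U`. Let `c_j ∈ A_j` be the point agreeing with `b` in the first `j - 1`
coordinates. Reducing the last row of `X(σ,j)` by the others gives `z(σ,j) = b_j - (c_j)_j`; in
particular `z(σ,1) = b_1 - x_{σ(1),1} ∈ ℤ`.

For the ratio put `z = z(σ,j)` and let `u`, `w` be the integral lifts of `e_j` in the directions
of `A_{j+1}` and `aff(A_j ∪ {b})`. Both `c_{j+1} - c_j` and `b - c_j` project to `z e_j`, so by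
injectivity they equal `z u` and `z w`, whence `z(σ,j+1) = b_{j+1} - (c_{j+1})_{j+1}
= z (w_{j+1} - u_{j+1})`.
-/

lemma coordN_sub {d : ℕ} (x y : Fin d → ℝ) (j : ℕ) :
    coordN (x - y) j = coordN x j - coordN y j := by
  unfold coordN; split_ifs <;> simp

lemma coordN_smul {d : ℕ} (a : ℝ) (x : Fin d → ℝ) (j : ℕ) :
    coordN (a • x) j = a * coordN x j := by
  unfold coordN; split_ifs <;> simp

lemma coordN_sum {d : ℕ} {ι : Type*} (s : Finset ι) (f : ι → Fin d → ℝ) (j : ℕ) :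
    coordN (∑ p ∈ s, f p) j = ∑ p ∈ s, coordN (f p) j := by
  unfold coordN; split_ifs <;> simp

lemma exists_int_coordN_eq {d : ℕ} {x : Fin d → ℝ} (hx : x ∈ latticePts d) (j : ℕ) :
    ∃ n : ℤ, coordN x j = n := by
  unfold coordN; split_ifs with hj
  · exact hx _
  · exact ⟨0, by simp⟩

lemma projTo_mem_latticePts {d k : ℕ} {x : Fin d → ℝ} (hx : x ∈ latticePts d) :
    projTo d k x ∈ latticePts k :=
  fun i => exists_int_coordN_eq hx i

lemma sub_mem_latticePts {d : ℕ} {x y : Fin d → ℝ} (hx : x ∈ latticePts d)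
    (hy : y ∈ latticePts d) : x - y ∈ latticePts d := fun i => by
  obtain ⟨m, hm⟩ := hx i
  obtain ⟨n, hn⟩ := hy i
  exact ⟨m - n, by simp [hm, hn]⟩

lemma projTo_eq_of_projTo_succ_eq {d m : ℕ} {x y : Fin d → ℝ}
    (h : projTo d (m + 1) x = projTo d (m + 1) y) : projTo d m x = projTo d m y :=
  funext fun i => congrFun h i.castSucc

lemma projTo_succ_eq_smul_single {d m : ℕ} {x : Fin d → ℝ} (hx : projTo d m x = 0) :
    projTo d (m + 1) x = coordN x m • Pi.single (Fin.last m) 1 := by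
  funext i
  induction i using Fin.lastCases with
  | last => simp [projTo, coordN]
  | cast i =>
    rw [Pi.smul_apply, Pi.single_eq_of_ne (Fin.castSucc_ne_last i), smul_zero]
    exact congrFun hx i

def projToLinearMap (d k : ℕ) : (Fin d → ℝ) →ₗ[ℝ] Fin k → ℝ where
  toFun := projTo d k
  map_add' x y := funext fun i => by
    simp only [Pi.add_apply]; unfold projTo; split_ifs <;> simp
  map_smul' a x := funext fun i => by
    simp only [Pi.smul_apply, RingHom.id_apply]; unfold projTo; split_ifs <;> simp

lemma projTo_sub {d k : ℕ} (x y : Fin d → ℝ) : projTo d k (x - y) = projTo d k x - projTo d k y :=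
  (projToLinearMap d k).map_sub x y

lemma projTo_smul {d k : ℕ} (a : ℝ) (x : Fin d → ℝ) : projTo d k (a • x) = a • projTo d k x :=
  (projToLinearMap d k).map_smul a x

lemma sub_mem_vectorSpan_of_mem_affineSpan {E : Type*} [AddCommGroup E] [Module ℝ E]
    {s : Set E} {x y : E} (hx : x ∈ affineSpan ℝ s) (hy : y ∈ affineSpan ℝ s) :
    x - y ∈ vectorSpan ℝ s :=
  vsub_mem_vectorSpan_of_mem_affineSpan_of_mem_affineSpan hx hy

theorem Matrix.det_eq_of_last_row_eq {R : Type*} [CommRing R] {n : ℕ}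
    (A : Matrix (Fin (n + 1)) (Fin (n + 1)) R) (w : Fin n → R) (a : R)
    (h : A (Fin.last n) = ∑ i, w i • A i.castSucc + Pi.single (Fin.last n) a) :
    A.det = a * (A.submatrix Fin.castSucc Fin.castSucc).det := by
  have hcomb : (A.updateRow (Fin.last n) (∑ i, w i • A i.castSucc)).det = 0 := by
    simpa [Fin.sum_univ_castSucc] using A.det_updateRow_sum (Fin.last n) (Fin.snoc w 0)
  have hsingle : (A.updateRow (Fin.last n) (Pi.single (Fin.last n) a)).det
      = a * (A.submatrix Fin.castSucc Fin.castSucc).det := by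
    rw [Matrix.det_succ_row _ (Fin.last n), Fintype.sum_eq_single (Fin.last n)]
    · rw [Matrix.submatrix_updateRow_succAbove, Fin.succAbove_last]
      simp [← two_mul, pow_mul]
    · intro q hq
      simp [hq]
  calc A.det = (A.updateRow (Fin.last n) (A (Fin.last n))).det := by rw [A.updateRow_eq_self]
    _ = a * (A.submatrix Fin.castSucc Fin.castSucc).det := by
      rw [h, Matrix.det_updateRow_add, hcomb, hsingle, zero_add]

namespace SimplexLatticeFace

variable {d : ℕ} {v : Fin (d + 1) → Fin d → ℝ}

lemma exists_lattice_lift (hLF : SimplexLatticeFace d v) {j : ℕ} (hj : j < d)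
    {U : Finset (Fin (d + 1))} (hU : U.card = j + 1) {t : Fin j → ℝ} (ht : t ∈ latticePts j) :
    ∃ p ∈ affineSpan ℝ (v '' U), p ∈ latticePts d ∧ projTo d j p = t := by
  rw [← hLF.2 j hj U hU] at ht
  obtain ⟨p, ⟨hpU, hpL⟩, rfl⟩ := ht
  exact ⟨p, hpU, hpL, rfl⟩

lemma vertex_mem_latticePts (hLF : SimplexLatticeFace d v) (hd : 0 < d) (i : Fin (d + 1)) :
    v i ∈ latticePts d := by
  obtain ⟨p, hp, hpL, -⟩ := hLF.exists_lattice_lift hd (Finset.card_singleton i)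
    (t := ![]) fun i => i.elim0
  rw [Finset.coe_singleton, Set.image_singleton, AffineSubspace.mem_affineSpan_singleton] at hp
  rwa [← hp]

lemma exists_lattice_vector (hLF : SimplexLatticeFace d v) {j : ℕ} (hj : j < d)
    {U : Finset (Fin (d + 1))} (hU : U.card = j + 1) (i : Fin j) :
    ∃ u ∈ vectorSpan ℝ (v '' U), u ∈ latticePts d ∧ projTo d j u = Pi.single i 1 := by
  have hsingle : (Pi.single i 1 : Fin j → ℝ) ∈ latticePts j := fun m => by
    rcases eq_or_ne m i with rfl | hm
    · exact ⟨1, by simp⟩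
    · exact ⟨0, by simp [hm]⟩
  obtain ⟨p₀, hp₀, hp₀L, hp₀t⟩ := hLF.exists_lattice_lift hj hU (t := 0) fun _ => ⟨0, by simp⟩
  obtain ⟨p₁, hp₁, hp₁L, hp₁t⟩ := hLF.exists_lattice_lift hj hU hsingle
  exact ⟨p₁ - p₀, sub_mem_vectorSpan_of_mem_affineSpan hp₁ hp₀,
    sub_mem_latticePts hp₁L hp₀L, by rw [projTo_sub, hp₁t, hp₀t, sub_zero]⟩

lemma projTo_injOn_vectorSpan (hLF : SimplexLatticeFace d v) {j : ℕ} (hj : j < d)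
    {U : Finset (Fin (d + 1))} (hU : U.card = j + 1) :
    Set.InjOn (projTo d j) (vectorSpan ℝ (v '' U)) := by
  set f := (projToLinearMap d j).domRestrict (vectorSpan ℝ (v '' U))
  have hsurj : Function.Surjective f := by
    rw [← LinearMap.range_eq_top, eq_top_iff, ← (Pi.basisFun ℝ (Fin j)).span_eq,
      Submodule.span_le]
    rintro _ ⟨i, rfl⟩
    obtain ⟨u, hu, -, hui⟩ := hLF.exists_lattice_vector hj hU i
    exact ⟨⟨u, hu⟩, by rw [Pi.basisFun_apply, ← hui]; rfl⟩
  have hrank : Module.finrank ℝ (vectorSpan ℝ (v '' U)) = Module.finrank ℝ (Fin j → ℝ) := by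
    refine le_antisymm ?_ (LinearMap.finrank_le_finrank_of_surjective hsurj)
    rw [Module.finrank_fin_fun, ← Finset.coe_image]
    exact finrank_vectorSpan_image_finset_le ℝ v U hU
  intro x hx y hy hxy
  have := ((LinearMap.injective_iff_surjective_of_finrank_eq_finrank hrank).mpr hsurj)
    (a₁ := ⟨x, hx⟩) (a₂ := ⟨y, hy⟩) hxy
  exact congrArg Subtype.val this

lemma eq_coordN_smul_of_projTo_eq_zero (hLF : SimplexLatticeFace d v) {m : ℕ} (hm : m + 1 < d)
    {U : Finset (Fin (d + 1))} (hU : U.card = m + 2) {u x : Fin d → ℝ}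
    (hu : u ∈ vectorSpan ℝ (v '' U)) (hue : projTo d (m + 1) u = Pi.single (Fin.last m) 1)
    (hx : x ∈ vectorSpan ℝ (v '' U)) (hx0 : projTo d m x = 0) : x = coordN x m • u :=
  hLF.projTo_injOn_vectorSpan hm hU hx (Submodule.smul_mem _ _ hu) <| by
    rw [projTo_succ_eq_smul_single hx0, projTo_smul, hue]

end SimplexLatticeFace

section Simplex

variable {d : ℕ}

/-- The index of the vertex `v_{σ(p+1)}` in row `p` of `X(σ,j)` and `Y(σ,j)`. -/
def permVertex (σ : Equiv.Perm (Fin d)) {j : ℕ} (hj : j ≤ d) : Fin j ↪ Fin (d + 1) :=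
  (Fin.castLEEmb hj).trans (σ.toEmbedding.trans Fin.castSuccEmb)

def firstVerts (σ : Equiv.Perm (Fin d)) {j : ℕ} (hj : j ≤ d) : Finset (Fin (d + 1)) :=
  Finset.univ.map (permVertex σ hj)

variable (σ : Equiv.Perm (Fin d))

lemma card_firstVerts {j : ℕ} (hj : j ≤ d) : (firstVerts σ hj).card = j := by
  simp [firstVerts]

lemma image_firstVerts (v : Fin (d + 1) → Fin d → ℝ) {j : ℕ} (hj : j ≤ d) :
    v '' firstVerts σ hj = Set.range (v ∘ permVertex σ hj) := by
  simp [firstVerts, Set.range_comp]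

lemma firstVerts_mono {i j : ℕ} (hij : i ≤ j) (hj : j ≤ d) :
    firstVerts σ (hij.trans hj) ⊆ firstVerts σ hj := by
  intro x hx
  obtain ⟨p, -, rfl⟩ := Finset.mem_map.mp hx
  exact Finset.mem_map.mpr ⟨Fin.castLE hij p, Finset.mem_univ _, rfl⟩

lemma last_notMem_firstVerts {j : ℕ} (hj : j ≤ d) : Fin.last d ∉ firstVerts σ hj := by
  simp [firstVerts, permVertex, Fin.castSucc_ne_last]

lemma rowVert_of_lt (v : Fin (d + 1) → Fin d → ℝ) {j : ℕ} (hj : j ≤ d) (p : Fin j) :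
    rowVert d v σ j p = v (permVertex σ hj p) :=
  dif_pos ⟨p.isLt, p.isLt.trans_le hj⟩

lemma rowVert_self (v : Fin (d + 1) → Fin d → ℝ) (j : ℕ) : rowVert d v σ j j = v (Fin.last d) :=
  dif_neg fun h => (lt_irrefl j) h.1

end Simplex

lemma det_Xmat_eq {d n : ℕ} (v : Fin (d + 1) → Fin d → ℝ) (σ : Equiv.Perm (Fin d))
    (hn : n + 1 ≤ d) {c : Fin d → ℝ} (hc : c ∈ affineSpan ℝ (v '' firstVerts σ hn))
    (hcb : projTo d n c = projTo d n (v (Fin.last d))) :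
    (Xmat d v σ (n + 1)).det
      = (coordN (v (Fin.last d)) n - coordN c n) * (Ymat d v σ (n + 1)).det := by
  rw [image_firstVerts] at hc
  obtain ⟨w, hw, hcw⟩ := eq_affineCombination_of_mem_affineSpan_of_fintype hc
  rw [Finset.univ.affineCombination_eq_linear_combination _ _ hw] at hcw
  have hcoord (j : ℕ) : coordN c j = ∑ p, w p * coordN (v (permVertex σ hn p)) j := by
    simp [hcw, coordN_sum, coordN_smul]
  refine Matrix.det_eq_of_last_row_eq _ w _ (funext fun q => ?_)
  induction q using Fin.cases with
  | zero => simp [Xmat, hw]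
  | succ q =>
    simp only [Xmat, Matrix.of_apply, Fin.val_succ, Fin.val_last, rowVert_self, Finset.sum_apply,
      Pi.add_apply, Pi.smul_apply, Fin.val_castSucc, rowVert_of_lt σ v hn, smul_eq_mul,
      Nat.add_one_ne_zero, if_false, Nat.add_sub_cancel, ← hcoord]
    induction q using Fin.lastCases with
    | last => simp
    | cast q =>
      rw [Fin.succ_castSucc, Pi.single_eq_of_ne (Fin.castSucc_ne_last _), add_zero]
      exact (congrFun hcb q).symm

lemma zc_zero {d : ℕ} (v : Fin (d + 1) → Fin d → ℝ) (σ : Equiv.Perm (Fin d)) :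
    zc d v σ 0 = 1 := by
  simp [zc, Xmat]

namespace SimplexLatticeFace

variable {d : ℕ} {v : Fin (d + 1) → Fin d → ℝ}

lemma det_Ymat_ne_zero (hLF : SimplexLatticeFace d v) (σ : Equiv.Perm (Fin d)) {n : ℕ}
    (hn : n + 1 ≤ d) : (Ymat d v σ (n + 1)).det ≠ 0 := by
  intro h0
  obtain ⟨u, hu0, hu⟩ := Matrix.exists_vecMul_eq_zero_iff.mpr h0
  set e := permVertex σ hn
  have hcol (q : Fin (n + 1)) : ∑ p, u p * Ymat d v σ (n + 1) p q = 0 := congrFun hu q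
  have hsum : ∑ p, u p = 0 := by simpa [Ymat] using hcol 0
  have hproj : projTo d n (∑ p, u p • v (e p)) = projTo d n 0 := funext fun i => by
    have := hcol i.succ
    simp only [Ymat, Matrix.of_apply, Fin.val_succ, Nat.add_one_ne_zero, if_false,
      Nat.add_sub_cancel, rowVert_of_lt σ v hn] at this
    change coordN _ i = coordN 0 i
    rw [coordN_sum]
    simp only [coordN_smul]
    rw [this]
    simp [coordN]
  have hmem : ∑ p, u p • v (e p) ∈ vectorSpan ℝ (v '' firstVerts σ hn) := by
    rw [image_firstVerts, ← Finset.univ.weightedVSub_eq_linear_combination hsum]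
    exact weightedVSub_mem_vectorSpan hsum _
  have hzero : ∑ p, u p • v (e p) = 0 :=
    hLF.projTo_injOn_vectorSpan hn (card_firstVerts σ hn) hmem (zero_mem _) hproj
  refine hu0 (funext fun p => hLF.1.comp_embedding e Finset.univ u hsum ?_ p (Finset.mem_univ p))
  rw [Finset.univ.weightedVSub_eq_linear_combination hsum]
  exact hzero

lemma zc_succ_eq (hLF : SimplexLatticeFace d v) (σ : Equiv.Perm (Fin d)) {n : ℕ}
    (hn : n + 1 ≤ d) {c : Fin d → ℝ} (hc : c ∈ affineSpan ℝ (v '' firstVerts σ hn))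
    (hcb : projTo d n c = projTo d n (v (Fin.last d))) :
    zc d v σ (n + 1) = coordN (v (Fin.last d)) n - coordN c n := by
  rw [zc, det_Xmat_eq v σ hn hc hcb, mul_div_cancel_right₀ _ (hLF.det_Ymat_ne_zero σ hn)]

lemma exists_int_zc_one_eq (hLF : SimplexLatticeFace d v) (σ : Equiv.Perm (Fin d))
    (hd : 1 ≤ d) : ∃ n : ℤ, zc d v σ 1 = n := by
  set c := v (permVertex σ hd 0)
  have hc : c ∈ affineSpan ℝ (v '' firstVerts σ hd) :=
    subset_affineSpan ℝ _ ⟨_, Finset.mem_map_of_mem _ (Finset.mem_univ 0), rfl⟩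
  obtain ⟨nb, hnb⟩ := exists_int_coordN_eq (hLF.vertex_mem_latticePts hd (Fin.last d)) 0
  obtain ⟨nc, hnc⟩ := exists_int_coordN_eq (hLF.vertex_mem_latticePts hd (permVertex σ hd 0)) 0
  refine ⟨nb - nc, ?_⟩
  rw [hLF.zc_succ_eq σ (n := 0) hd hc (Subsingleton.elim _ _), hnb, hnc, Int.cast_sub]

lemma exists_zc_eq_int_mul (hLF : SimplexLatticeFace d v) (σ : Equiv.Perm (Fin d)) {m : ℕ}
    (hm : m + 2 ≤ d) : ∃ n : ℤ, zc d v σ (m + 2) = n * zc d v σ (m + 1) := by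
  set b := v (Fin.last d)
  have hb : b ∈ latticePts d := hLF.vertex_mem_latticePts (by omega) _
  have hm' : m + 1 ≤ d := by omega
  obtain ⟨c₁, hc₁, -, hc₁b⟩ := hLF.exists_lattice_lift (U := firstVerts σ hm') (by omega)
    (card_firstVerts σ hm') (projTo_mem_latticePts hb)
  obtain ⟨c₂, hc₂, -, hc₂b⟩ := hLF.exists_lattice_lift (U := firstVerts σ hm) hm
    (card_firstVerts σ hm) (projTo_mem_latticePts hb)
  rw [hLF.zc_succ_eq σ hm hc₂ hc₂b, hLF.zc_succ_eq σ hm' hc₁ hc₁b]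
  set z := coordN b m - coordN c₁ m
  obtain ⟨u, hu, huL, hue⟩ :=
    hLF.exists_lattice_vector (U := firstVerts σ hm) hm (card_firstVerts σ hm) (Fin.last m)
  set B := insert (Fin.last d) (firstVerts σ hm')
  have hB : B.card = m + 2 := by
    rw [Finset.card_insert_of_notMem (last_notMem_firstVerts σ hm'), card_firstVerts]
  obtain ⟨w, hw, hwL, hwe⟩ := hLF.exists_lattice_vector hm hB (Fin.last m)
  have hc₂c₁ : c₂ - c₁ = z • u := by
    have hc₁' : c₁ ∈ affineSpan ℝ (v '' firstVerts σ hm) :=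
      affineSpan_mono ℝ (Set.image_mono (firstVerts_mono σ (by omega : m + 1 ≤ m + 2) hm)) hc₁
    have h := hLF.eq_coordN_smul_of_projTo_eq_zero hm (card_firstVerts σ hm) hu hue
      (sub_mem_vectorSpan_of_mem_affineSpan hc₂ hc₁')
      (by rw [projTo_sub, projTo_eq_of_projTo_succ_eq hc₂b, hc₁b, sub_self])
    rwa [coordN_sub, show coordN c₂ m = coordN b m from congrFun hc₂b (Fin.last m)] at h
  have hbc₁ : b - c₁ = z • w := by
    have hbB : b ∈ affineSpan ℝ (v '' B) :=
      subset_affineSpan ℝ _ ⟨_, Finset.mem_insert_self _ _, rfl⟩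
    have hc₁B : c₁ ∈ affineSpan ℝ (v '' B) :=
      affineSpan_mono ℝ (Set.image_mono (Finset.subset_insert _ _)) hc₁
    have h := hLF.eq_coordN_smul_of_projTo_eq_zero hm hB hw hwe
      (sub_mem_vectorSpan_of_mem_affineSpan hbB hc₁B)
      (by rw [projTo_sub, hc₁b, sub_self])
    rwa [coordN_sub] at h
  obtain ⟨nu, hnu⟩ := exists_int_coordN_eq huL (m + 1)
  obtain ⟨nw, hnw⟩ := exists_int_coordN_eq hwL (m + 1)
  refine ⟨nw - nu, ?_⟩
  calc coordN b (m + 1) - coordN c₂ (m + 1) = coordN ((b - c₁) - (c₂ - c₁)) (m + 1) := by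
        simp only [coordN_sub]; ring
    _ = (nw - nu : ℤ) * z := by
        rw [hbc₁, hc₂c₁, coordN_sub, coordN_smul, coordN_smul, hnu, hnw]; push_cast; ring

end SimplexLatticeFace

theorem z_ratio_is_integer_general
    (d : ℕ) (v : Fin (d + 1) → Fin d → ℝ)
    (hLF : SimplexLatticeFace d v) (σ : Equiv.Perm (Fin d)) (k : ℕ)
    (hk1 : 1 ≤ k) (hkd : k ≤ d) :
    ∃ n : ℤ, zc d v σ k / zc d v σ (k - 1) = (n : ℝ) := by
  obtain ⟨m, rfl⟩ : ∃ m, k = m + 1 := ⟨k - 1, by omega⟩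
  rw [Nat.add_sub_cancel]
  rcases m with _ | m
  · simpa [zc_zero] using hLF.exists_int_zc_one_eq σ hkd
  · obtain ⟨n, hn⟩ := hLF.exists_zc_eq_int_mul σ hkd
    by_cases hz : zc d v σ (m + 1) = 0
    · exact ⟨0, by simp [hz]⟩
    · exact ⟨n, by rw [hn, mul_div_cancel_right₀ _ hz]⟩

theorem z_ratio_is_integer
    (d : ℕ) (hd : 1 ≤ d) (v : Fin (d + 1) → Fin d → ℝ)
    (hLF : SimplexLatticeFace d v) (σ : Equiv.Perm (Fin d)) (k : ℕ)
    (hk1 : 1 ≤ k) (hkd : k ≤ d) :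
    ∃ n : ℤ, zc d v σ k / zc d v σ (k - 1) = (n : ℝ) :=
  z_ratio_is_integer_general d v hLF σ k hk1 hkd
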